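/- Completeness of the MILL sequent calculus: if the formula Γ* ⊸ A is valid in every modal Kripke resource model (i.e., holds at the unit e), then the sequent Γ ⊢ A is derivable in the MILL sequent calculus. -/
import Mathlib


/-- Formulas of modal intuitionistic linear logic (MILL): atoms, 1, ⊗, &, ⊸, □. -/
inductive Fm : Type where
  | atom : ℕ → Fm
  | one : Fm
  | tensor : Fm → Fm → Fm
  | and : Fm → Fm → Fm
  | limp : Fm → Fm → Fm
  | box : Fm → Fm

/-- Raw data of a modal Kripke resource frame/model. -/
structure KFrame where
  W : Type
  e : W
  mul : W → W → W
  ge : W → W → Prop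
  N : W → Set (Set W)
  V : ℕ → Set W

/-- Truth at a world of a modal Kripke resource model. -/
def sat (F : KFrame) : F.W → Fm → Prop
  | m, .atom p => m ∈ F.V p
  | m, .one => F.ge m F.e
  | m, .tensor A B => ∃ m1 m2, F.ge m (F.mul m1 m2) ∧ sat F m1 A ∧ sat F m2 B
  | m, .and A B => sat F m A ∧ sat F m B
  | m, .limp A B => ∀ n, sat F n A → sat F (F.mul n m) B
  | m, .box A => {n | sat F n A} ∈ F.N m

/-- The axioms making the data a modal Kripke resource model:
commutative monoid, preorder, bifunctoriality, hereditary valuation,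
and heredity of the neighbourhood function. -/
def IsMKRM (F : KFrame) : Prop :=
  (∀ a b, F.mul a b = F.mul b a) ∧
  (∀ a b c, F.mul (F.mul a b) c = F.mul a (F.mul b c)) ∧
  (∀ a, F.mul a F.e = a) ∧
  (∀ a, F.ge a a) ∧
  (∀ a b c, F.ge a b → F.ge b c → F.ge a c) ∧
  (∀ m n m' n', F.ge m n → F.ge m' n' → F.ge (F.mul m m') (F.mul n n')) ∧
  (∀ p m n, m ∈ F.V p → F.ge n m → n ∈ F.V p) ∧
  (∀ X m n, X ∈ F.N m → F.ge n m → X ∈ F.N n)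

/-- The MILL sequent calculus over multisets of formulas. -/
inductive Der : Multiset Fm → Fm → Prop where
  | ax (A : Fm) : Der {A} A
  | cut {Γ Γ' : Multiset Fm} {A C : Fm} :
      Der (A ::ₘ Γ) C → Der Γ' A → Der (Γ + Γ') C
  | tensorL {Γ : Multiset Fm} {A B C : Fm} :
      Der (A ::ₘ B ::ₘ Γ) C → Der (Fm.tensor A B ::ₘ Γ) C
  | tensorR {Γ Γ' : Multiset Fm} {A B : Fm} :
      Der Γ A → Der Γ' B → Der (Γ + Γ') (Fm.tensor A B)
  | limpL {Γ Γ' : Multiset Fm} {A B C : Fm} :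
      Der Γ A → Der (B ::ₘ Γ') C → Der (Fm.limp A B ::ₘ (Γ + Γ')) C
  | limpR {Γ : Multiset Fm} {A B : Fm} :
      Der (A ::ₘ Γ) B → Der Γ (Fm.limp A B)
  | andL1 {Γ : Multiset Fm} {A B C : Fm} :
      Der (A ::ₘ Γ) C → Der (Fm.and A B ::ₘ Γ) C
  | andL2 {Γ : Multiset Fm} {A B C : Fm} :
      Der (B ::ₘ Γ) C → Der (Fm.and A B ::ₘ Γ) C
  | andR {Γ : Multiset Fm} {A B : Fm} :
      Der Γ A → Der Γ B → Der Γ (Fm.and A B)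
  | oneL {Γ : Multiset Fm} {C : Fm} :
      Der Γ C → Der (Fm.one ::ₘ Γ) C
  | oneR : Der 0 Fm.one
  | boxRe {A B : Fm} :
      Der {A} B → Der {B} A → Der {Fm.box A} (Fm.box B)

/-- Tensor of a list of formulas (empty list ↦ 1, singleton ↦ the formula). -/
def listStar : List Fm → Fm
  | [] => Fm.one
  | [A] => A
  | A :: l => Fm.tensor A (listStar l)

/-- Γ*: the tensor of all the formulas in the multiset Γ, with ∅* = 1. -/
noncomputable def star (Γ : Multiset Fm) : Fm := listStar Γ.toList

lemma list_der : ∀ l : List Fm, Der (↑l) (listStar l)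
  | [] => by simpa [listStar] using Der.oneR
  | [A] => by simpa [listStar] using Der.ax A
  | A :: B :: l => by
      have ih := list_der (B :: l)
      have h := Der.tensorR (Der.ax A) ih
      simpa [listStar, Multiset.singleton_add] using h

lemma list_star_cons : ∀ (l : List Fm) (Θ : Multiset Fm) (C : Fm),
    Der (↑l + Θ) C → Der (listStar l ::ₘ Θ) C
  | [], Θ, C, h => by
      simp only [listStar]
      exact Der.oneL (by simpa using h)
  | [A], Θ, C, h => by
      simpa [listStar, Multiset.singleton_add] using h
  | A :: B :: l, Θ, C, h => by
      have h1 : Der ((↑(B :: l) : Multiset Fm) + (A ::ₘ Θ)) C := by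
        have e : (↑(B :: l) : Multiset Fm) + (A ::ₘ Θ)
            = (↑(A :: B :: l) : Multiset Fm) + Θ := by
          simp [← Multiset.cons_coe, Multiset.cons_add, Multiset.add_cons]
        rw [e]; exact h
      have h2 := list_star_cons (B :: l) (A ::ₘ Θ) C h1
      rw [Multiset.cons_swap] at h2
      simpa [listStar] using Der.tensorL h2

lemma der_star (Γ : Multiset Fm) : Der Γ (star Γ) := by
  have := list_der Γ.toList
  rwa [Multiset.coe_toList] at this

lemma star_cons {Γ Θ : Multiset Fm} {C : Fm} (h : Der (Γ + Θ) C) :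
    Der (star Γ ::ₘ Θ) C := by
  apply list_star_cons Γ.toList Θ C
  rwa [Multiset.coe_toList]

lemma star_cut {Γ Δ : Multiset Fm} {C : Fm} (h1 : Der Γ (star Δ)) (h2 : Der Δ C) :
    Der Γ C := by
  have h3 : Der (star Δ ::ₘ 0) C := star_cons (by simpa using h2)
  simpa using Der.cut h3 h1

noncomputable abbrev canonical : KFrame where
  W := Multiset Fm
  e := 0
  mul := (· + ·)
  ge := fun m n => Der m (star n)
  N := fun m => {X | ∃ B, Der m (Fm.box B) ∧ X = {Δ | Der Δ B}}
  V := fun p => {Δ | Der Δ (Fm.atom p)}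

lemma canonical_isMKRM : IsMKRM canonical := by
  refine ⟨fun a b => add_comm a b, fun a b c => add_assoc a b c, fun a => add_zero a,
    fun a => der_star a, ?_, ?_, ?_, ?_⟩
  · intro a b c h1 h2
    exact star_cut h1 h2
  · intro m n m' n' h1 h2
    have h3 : Der (m + m') (Fm.tensor (star n) (star n')) := Der.tensorR h1 h2
    have h4 : Der (Fm.tensor (star n) (star n') ::ₘ 0) (star (n + n')) := by
      apply Der.tensorL
      have h5 : Der ((n : Multiset Fm) + n') (star (n + n')) := der_star _
      have h6 : Der (star n ::ₘ n') (star (n + n')) := star_cons h5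
      have h7 : Der ((n' : Multiset Fm) + {star n}) (star (n + n')) := by
        have e : (n' : Multiset Fm) + {star n} = star n ::ₘ n' := by
          rw [add_comm, Multiset.singleton_add]
        rw [e]; exact h6
      have h8 : Der (star n' ::ₘ star n ::ₘ 0) (star (n + n')) := star_cons h7
      rw [Multiset.cons_swap] at h8
      exact h8
    simpa using Der.cut h4 h3
  · intro p m n h1 h2
    exact star_cut h2 h1
  · intro X m n h1 h2
    obtain ⟨B, hB, rfl⟩ := h1
    exact ⟨B, star_cut h2 hB, rfl⟩

lemma truth_lemma : ∀ (A : Fm) (Γ : Multiset Fm), sat canonical Γ A ↔ Der Γ A := by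
  intro A
  induction A with
  | atom p => intro Γ; exact Iff.rfl
  | one =>
      intro Γ
      show Der Γ (star 0) ↔ Der Γ Fm.one
      have : _root_.star (0 : Multiset Fm) = Fm.one := by
        unfold _root_.star
        simp [Multiset.toList_zero, listStar]
      rw [this]
  | tensor A B ihA ihB =>
      intro Γ
      constructor
      · rintro ⟨m1, m2, hge, h1, h2⟩
        have hd : Der (m1 + m2) (Fm.tensor A B) :=
          Der.tensorR ((ihA m1).mp h1) ((ihB m2).mp h2)
        exact star_cut hge hd
      · intro hd
        refine ⟨{A}, {B}, ?_, (ihA _).mpr (Der.ax A), (ihB _).mpr (Der.ax B)⟩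
        show Der Γ (star ({A} + {B}))
        have h4 : Der (Fm.tensor A B ::ₘ 0) (star ({A} + {B})) := by
          apply Der.tensorL
          have := der_star ({A} + {B} : Multiset Fm)
          have e : ({A} + {B} : Multiset Fm) = A ::ₘ B ::ₘ 0 := by
            simp [Multiset.singleton_add]
          rwa [e] at this
        simpa using Der.cut h4 hd
  | and A B ihA ihB =>
      intro Γ
      constructor
      · rintro ⟨h1, h2⟩
        exact Der.andR ((ihA Γ).mp h1) ((ihB Γ).mp h2)
      · intro hd
        constructor
        · refine (ihA Γ).mpr ?_
          have h4 : Der (Fm.and A B ::ₘ 0) A := Der.andL1 (Der.ax A)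
          simpa using Der.cut h4 hd
        · refine (ihB Γ).mpr ?_
          have h4 : Der (Fm.and A B ::ₘ 0) B := Der.andL2 (Der.ax B)
          simpa using Der.cut h4 hd
  | limp A B ihA ihB =>
      intro Γ
      constructor
      · intro hs
        apply Der.limpR
        have := hs {A} ((ihA _).mpr (Der.ax A))
        have hd := (ihB _).mp this
        have e : (canonical.mul {A} Γ : Multiset Fm) = A ::ₘ Γ := by
          show ({A} : Multiset Fm) + Γ = A ::ₘ Γ
          simp [Multiset.singleton_add]
        rwa [e] at hd
      · intro hd n hn
        refine (ihB _).mpr ?_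
        have h2 : Der (Fm.limp A B ::ₘ (n + 0)) B :=
          Der.limpL ((ihA n).mp hn) (by simpa using Der.ax B)
        have h3 := Der.cut (by simpa using h2) hd
        show Der (n + Γ) B
        simpa using h3
  | box A ihA =>
      intro Γ
      constructor
      · rintro ⟨B, hB, hX⟩
        have hiff : ∀ Δ, Der Δ A ↔ Der Δ B := by
          intro Δ
          constructor
          · intro h; rw [← ihA Δ] at h
            have := Set.ext_iff.mp hX Δ
            exact this.mp h
          · intro h
            have := Set.ext_iff.mp hX Δ
            exact (ihA Δ).mp (this.mpr h)
        have hAB : Der ({A} : Multiset Fm) B := (hiff {A}).mp (Der.ax A)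
        have hBA : Der ({B} : Multiset Fm) A := (hiff {B}).mpr (Der.ax B)
        have h4 : Der ({Fm.box B} : Multiset Fm) (Fm.box A) := Der.boxRe hBA hAB
        have h5 : Der (Fm.box B ::ₘ 0) (Fm.box A) := by simpa using h4
        simpa using Der.cut h5 hB
      · intro hd
        refine ⟨A, hd, ?_⟩
        ext Δ
        exact ihA Δ


/-- completeness of the MILL sequent calculus:
if Γ* ⊸ A holds at the unit of every modal Kripke resource model,
then Γ ⊢ A is derivable. -/
theorem completeness (Γ : Multiset Fm) (A : Fm)
    (h : ∀ F : KFrame, IsMKRM F → sat F F.e (Fm.limp (star Γ) A)) :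
    Der Γ A := by
  have hc := h canonical canonical_isMKRM
  have hs : sat canonical Γ (star Γ) := (truth_lemma (star Γ) Γ).mpr (der_star Γ)
  have := hc Γ hs
  have hd := (truth_lemma A _).mp this
  show Der Γ A
  have e : (canonical.mul Γ canonical.e : Multiset Fm) = Γ := by
    show Γ + 0 = Γ; simp
  rwa [e] at hd
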